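/- arXiv:2304.04050 — 3 statements merged into one kernel-verified Lean document; each statement's English description precedes it below -/
import Mathlib

section
/- Let h(ρ) = ρ^γ/(γ-1) with γ > 1 and define the relative quantity h(ρ|r) = h(ρ) - h(r) - h'(r)(ρ - r). If r is restricted to a compact interval [a,b] with a > 0, then there exist R₀ > 0 and constants C₁, C₂ > 0 (depending on a, b, γ) such that h(ρ|r) ≥ C₁|ρ - r|^γ whenever ρ > R₀ and r ∈ [a,b], and h(ρ|r) ≥ C₂|ρ - r|² whenever 0 < ρ ≤ R₀ and r ∈ [a,b]. -/
/-- `h(ρ) = ρ^γ/(γ-1)`. -/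
noncomputable def hfun (γ ρ : ℝ) : ℝ := ρ ^ γ / (γ - 1)

/-- Relative entropy `h(ρ|r) = h(ρ) - h(r) - h'(r)(ρ-r)`, with `h'(r) = γ r^{γ-1}/(γ-1)`. -/
noncomputable def hrel (γ ρ r : ℝ) : ℝ :=
  hfun γ ρ - hfun γ r - (γ * r ^ (γ - 1) / (γ - 1)) * (ρ - r)

open Real intervalIntegral

lemma bern_le {p x : ℝ} (hp : 0 < p) (hp1 : p ≤ 1) (hx : 0 ≤ x) (hx1 : x ≤ 1) :
    x ^ p ≤ 1 + p * (x - 1) := by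
  have hs : (-1 : ℝ) ≤ x - 1 := by linarith
  have := rpow_one_add_le_one_add_mul_self hs hp.le hp1
  simpa using this

/-- Key pointwise inequality. -/
lemma key (p a R s t : ℝ) (hp : 0 < p) (ha : 0 < a) (hs : 0 ≤ s) (hst : s ≤ t)
    (hat : a ≤ t) (htR : t ≤ R) :
    min 1 p * min (a ^ (p - 1)) (R ^ (p - 1)) * (t - s) ≤ t ^ p - s ^ p := by
  have ht : 0 < t := lt_of_lt_of_le ha hat
  have hR : 0 < R := lt_of_lt_of_le ht htR
  have htp : t ^ p = t * t ^ (p - 1) := by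
    rw [Real.rpow_sub_one ht.ne']; field_simp
  rcases le_or_gt 1 p with h1 | h1
  · -- convex case: t^p - s^p ≥ t^(p-1) (t - s)
    have hsp : s ^ p ≤ s * t ^ (p - 1) := by
      rcases eq_or_lt_of_le hs with h | h
      · rw [← h, Real.zero_rpow hp.ne', zero_mul]
      · have hsp' : s ^ p = s * s ^ (p - 1) := by
          rw [Real.rpow_sub_one h.ne']; field_simp
        rw [hsp']
        exact mul_le_mul_of_nonneg_left
          (Real.rpow_le_rpow hs hst (by linarith)) hs
    have hcoef : min 1 p * min (a ^ (p - 1)) (R ^ (p - 1)) ≤ t ^ (p - 1) := by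
      have h2 : a ^ (p - 1) ≤ t ^ (p - 1) :=
        Real.rpow_le_rpow ha.le hat (by linarith)
      have h3 : min 1 p * min (a ^ (p - 1)) (R ^ (p - 1)) ≤ 1 * a ^ (p - 1) :=
        mul_le_mul (min_le_left _ _) (min_le_left _ _)
          (le_min (Real.rpow_nonneg ha.le _) (Real.rpow_nonneg hR.le _)) zero_le_one
      linarith
    nlinarith [mul_le_mul_of_nonneg_right hcoef (sub_nonneg.mpr hst)]
  · -- concave case
    have hx1 : s / t ≤ 1 := (div_le_one ht).mpr hst
    have hx0 : 0 ≤ s / t := div_nonneg hs ht.le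
    have hb := bern_le hp h1.le hx0 hx1
    have htp0 : (0:ℝ) < t ^ p := Real.rpow_pos_of_pos ht p
    have hmain : s ^ p ≤ t ^ p + p * t ^ (p - 1) * (s - t) := by
      have hq : (1 + p * (s / t - 1)) * t ^ p = t ^ p + p * t ^ (p - 1) * (s - t) := by
        rw [htp]; field_simp
      calc s ^ p = (s / t) ^ p * t ^ p := by
              rw [Real.div_rpow hs ht.le]; field_simp
        _ ≤ (1 + p * (s / t - 1)) * t ^ p := mul_le_mul_of_nonneg_right hb htp0.le
        _ = t ^ p + p * t ^ (p - 1) * (s - t) := hq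
    have hcoef : min 1 p * min (a ^ (p - 1)) (R ^ (p - 1)) ≤ p * t ^ (p - 1) := by
      have h2 : R ^ (p - 1) ≤ t ^ (p - 1) :=
        Real.rpow_le_rpow_of_nonpos ht htR (by linarith)
      have h3 : min 1 p * min (a ^ (p - 1)) (R ^ (p - 1)) ≤ p * R ^ (p - 1) :=
        mul_le_mul (min_le_right _ _) (min_le_right _ _)
          (le_min (Real.rpow_nonneg ha.le _) (Real.rpow_nonneg hR.le _)) hp.le
      nlinarith
    nlinarith [mul_le_mul_of_nonneg_right hcoef (sub_nonneg.mpr hst)]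

lemma cont_rpow {p : ℝ} (hp : 0 < p) : Continuous fun t : ℝ => t ^ p := by
  rw [continuous_iff_continuousAt]
  intro x
  exact Real.continuousAt_rpow_const x p (Or.inr hp.le)

lemma hrel_int (γ : ℝ) (hγ : 1 < γ) (ρ r : ℝ) :
    hrel γ ρ r = ∫ t in r..ρ, γ / (γ - 1) * (t ^ (γ - 1) - r ^ (γ - 1)) := by
  have hd : ∀ t : ℝ, HasDerivAt (fun x : ℝ => x ^ γ / (γ - 1) - γ * r ^ (γ - 1) / (γ - 1) * x)
      (γ / (γ - 1) * (t ^ (γ - 1) - r ^ (γ - 1))) t := by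
    intro t
    have h1 : HasDerivAt (fun x : ℝ => x ^ γ) (γ * t ^ (γ - 1)) t :=
      Real.hasDerivAt_rpow_const (Or.inr hγ.le)
    have h2 := (h1.div_const (γ - 1)).sub (((hasDerivAt_id t).const_mul
      (γ * r ^ (γ - 1) / (γ - 1))))
    convert h2 using 1
    · rfl
    · rfl
    · rfl
    ring
  have hci : IntervalIntegrable (fun t : ℝ => γ / (γ - 1) * (t ^ (γ - 1) - r ^ (γ - 1)))
      MeasureTheory.volume r ρ :=
    (continuous_const.mul ((cont_rpow (show (0:ℝ) < γ - 1 by linarith)).sub continuous_const)).intervalIntegrable r ρ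
  have := intervalIntegral.integral_eq_sub_of_hasDerivAt (fun t _ => hd t) hci
  rw [this]
  unfold hrel hfun
  ring

lemma lin_int (K c x y : ℝ) :
    ∫ t in x..y, K * (t - c) = K * ((y ^ 2 - x ^ 2) / 2 - c * (y - x)) := by
  rw [intervalIntegral.integral_const_mul,
    intervalIntegral.integral_sub intervalIntegral.intervalIntegrable_id
      (intervalIntegrable_const : IntervalIntegrable (fun _ => c) MeasureTheory.volume x y),
    integral_id, intervalIntegral.integral_const]
  simp [smul_eq_mul]
  ring_nf
  tauto

/-- Two-regime lower bound for the relative entropy `h(ρ|r)` with `r` in a compact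
interval `[a,b] ⊂ (0,∞)`. -/
theorem statement2 (γ a b : ℝ) (hγ : 1 < γ) (ha : 0 < a) (hab : a ≤ b) :
    ∃ R₀ > (0:ℝ), ∃ C₁ > (0:ℝ), ∃ C₂ > (0:ℝ),
      ∀ ρ r : ℝ, r ∈ Set.Icc a b →
        (R₀ < ρ → C₁ * |ρ - r| ^ γ ≤ hrel γ ρ r) ∧
        (0 < ρ → ρ ≤ R₀ → C₂ * |ρ - r| ^ (2:ℕ) ≤ hrel γ ρ r) := by
  have hγ0 : (0:ℝ) < γ - 1 := by linarith
  have hb : 0 < b := lt_of_lt_of_le ha hab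
  set R₀ : ℝ := max (2 * b) ((2 * (1 + γ)) ^ ((1:ℝ)/(γ-1)) * b) with hR₀def
  have h2b : 2 * b ≤ R₀ := le_max_left _ _
  have hR₀pos : 0 < R₀ := lt_of_lt_of_le (by linarith) h2b
  have hbR : b ≤ R₀ := by linarith
  set m : ℝ := min 1 (γ-1) * min (a ^ (γ - 1 - 1)) (R₀ ^ (γ - 1 - 1)) with hm
  have hmpos : 0 < m := mul_pos (lt_min one_pos hγ0)
    (lt_min (Real.rpow_pos_of_pos ha _) (Real.rpow_pos_of_pos hR₀pos _))
  refine ⟨R₀, hR₀pos, 1/(2*(γ-1)), by positivity, γ*m/(2*(γ-1)), by positivity, ?_⟩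
  intro ρ r hr
  obtain ⟨har, hrb⟩ := hr
  have hr0 : 0 < r := lt_of_lt_of_le ha har
  constructor
  · -- Regime 1 : ρ > R₀
    intro hρ
    have hρpos : 0 < ρ := lt_trans hR₀pos hρ
    have hrρ : r < ρ := by linarith
    rw [abs_of_pos (by linarith : (0:ℝ) < ρ - r)]
    have h1 : (ρ - r) ^ γ ≤ ρ ^ γ :=
      Real.rpow_le_rpow (by linarith) (by linarith) (by linarith)
    have hbγ : b ^ γ = b ^ (γ-1) * b := by
      rw [← Real.rpow_add_one hb.ne' (γ-1)]; ring_nf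
    have hργ : ρ ^ γ = ρ ^ (γ-1) * ρ := by
      rw [← Real.rpow_add_one hρpos.ne' (γ-1)]; ring_nf
    have hbp : (0:ℝ) < b ^ (γ-1) := Real.rpow_pos_of_pos hb _
    have hrγ : r ^ γ ≤ b ^ (γ-1) * ρ := by
      have := Real.rpow_le_rpow hr0.le hrb (by linarith : (0:ℝ) ≤ γ)
      nlinarith
    have hrb1 : r ^ (γ-1) ≤ b ^ (γ-1) := Real.rpow_le_rpow hr0.le hrb (by linarith)
    have hrp0 : (0:ℝ) ≤ r ^ (γ-1) := Real.rpow_nonneg hr0.le _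
    have h3' : r ^ (γ-1) * (ρ - r) ≤ b ^ (γ-1) * ρ :=
      mul_le_mul hrb1 (by linarith) (by linarith) hbp.le
    have h3 : γ * r ^ (γ-1) * (ρ - r) ≤ γ * b ^ (γ-1) * ρ := by
      nlinarith [mul_le_mul_of_nonneg_left h3' (by linarith : (0:ℝ) ≤ γ)]
    have h4 : 2 * (1 + γ) * b ^ (γ-1) ≤ ρ ^ (γ-1) := by
      have hk : ((2 * (1 + γ)) ^ ((1:ℝ)/(γ-1)) * b) ^ (γ-1)
          = (2 * (1 + γ)) * b ^ (γ-1) := by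
        rw [Real.mul_rpow (Real.rpow_nonneg (by linarith) _) hb.le,
          ← Real.rpow_mul (by linarith : (0:ℝ) ≤ 2 * (1 + γ)),
          one_div, inv_mul_cancel₀ hγ0.ne', Real.rpow_one]
      have hx : (2 * (1 + γ)) ^ ((1:ℝ)/(γ-1)) * b ≤ ρ :=
        le_trans (le_max_right _ _) hρ.le
      have := Real.rpow_le_rpow
        (mul_nonneg (Real.rpow_nonneg (by linarith) _) hb.le) hx hγ0.le
      rw [hk] at this
      linarith
    have hrw : hrel γ ρ r = (ρ^γ - r^γ - γ * r^(γ-1) * (ρ-r)) / (γ-1) := by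
      unfold hrel hfun; ring
    rw [hrw]
    have hne : γ - 1 ≠ 0 := hγ0.ne'
    have hlhs : 1/(2*(γ-1)) * (ρ-r)^γ = ((ρ-r)^γ/2)/(γ-1) := by
      field_simp
    rw [hlhs]
    gcongr
    nlinarith [mul_le_mul_of_nonneg_right h4 hρpos.le]
  · -- Regime 2 : 0 < ρ ≤ R₀
    intro hρ0 hρR
    rw [sq_abs]
    rcases lt_trichotomy ρ r with hlt | heq | hgt
    · -- ρ < r
      rw [hrel_int γ hγ ρ r]
      have hsymm : (∫ t in r..ρ, γ/(γ-1)*(t^(γ-1) - r^(γ-1)))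
          = ∫ t in ρ..r, γ/(γ-1)*(r^(γ-1) - t^(γ-1)) := by
        rw [intervalIntegral.integral_symm, ← intervalIntegral.integral_neg]
        congr 1; funext t; ring
      rw [hsymm]
      have hintf : IntervalIntegrable (fun t : ℝ => -(γ/(γ-1)*m) * (t - r))
          MeasureTheory.volume ρ r :=
        (continuous_const.mul ((continuous_id).sub continuous_const)).intervalIntegrable ρ r
      have hintg : IntervalIntegrable (fun t : ℝ => γ/(γ-1)*(r^(γ-1) - t^(γ-1)))
          MeasureTheory.volume ρ r :=
        (continuous_const.mul (continuous_const.sub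
          (cont_rpow (show (0:ℝ) < γ - 1 by linarith)))).intervalIntegrable ρ r
      have hle : ∀ t ∈ Set.Icc ρ r, -(γ/(γ-1)*m) * (t - r)
          ≤ γ/(γ-1)*(r^(γ-1) - t^(γ-1)) := by
        intro t ht
        have hk := key (γ-1) a R₀ t r hγ0 ha (le_trans hρ0.le ht.1) ht.2 har
          (le_trans hrb hbR)
        rw [← hm] at hk
        have h2 : γ/(γ-1) * (m * (r - t)) ≤ γ/(γ-1) * (r^(γ-1) - t^(γ-1)) :=
          mul_le_mul_of_nonneg_left hk (by positivity)
        nlinarith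
      have hmono := intervalIntegral.integral_mono_on hlt.le hintf hintg hle
      rw [lin_int (-(γ/(γ-1)*m)) r ρ r] at hmono
      have hfin : γ*m/(2*(γ-1)) * (ρ-r)^2
          = -(γ/(γ-1)*m) * ((r^2 - ρ^2)/2 - r*(r-ρ)) := by
        have hne : γ - 1 ≠ 0 := hγ0.ne'
        field_simp
        ring
      linarith [hfin ▸ hmono]
    · -- ρ = r
      subst heq
      simp [hrel, sub_self]
    · -- r < ρ
      rw [hrel_int γ hγ ρ r]
      have hintf : IntervalIntegrable (fun t : ℝ => (γ/(γ-1)*m) * (t - r))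
          MeasureTheory.volume r ρ :=
        (continuous_const.mul ((continuous_id).sub continuous_const)).intervalIntegrable r ρ
      have hintg : IntervalIntegrable (fun t : ℝ => γ/(γ-1)*(t^(γ-1) - r^(γ-1)))
          MeasureTheory.volume r ρ :=
        (continuous_const.mul ((cont_rpow (show (0:ℝ) < γ - 1 by linarith)).sub
          continuous_const)).intervalIntegrable r ρ
      have hle : ∀ t ∈ Set.Icc r ρ, (γ/(γ-1)*m) * (t - r)
          ≤ γ/(γ-1)*(t^(γ-1) - r^(γ-1)) := by
        intro t ht
        have hk := key (γ-1) a R₀ r t hγ0 ha hr0.le ht.1 (le_trans har ht.1)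
          (le_trans ht.2 hρR)
        rw [← hm] at hk
        have h2 : γ/(γ-1) * (m * (t - r)) ≤ γ/(γ-1) * (t^(γ-1) - r^(γ-1)) :=
          mul_le_mul_of_nonneg_left hk (by positivity)
        nlinarith
      have hmono := intervalIntegral.integral_mono_on hgt.le hintf hintg hle
      rw [lin_int (γ/(γ-1)*m) r r ρ] at hmono
      have hfin : γ*m/(2*(γ-1)) * (ρ-r)^2
          = (γ/(γ-1)*m) * ((ρ^2 - r^2)/2 - r*(ρ-r)) := by
        have hne : γ - 1 ≠ 0 := hγ0.ne'
        field_simp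
        ring
      linarith [hfin ▸ hmono]
end

section
/- Let h(ρ) = ρ^γ/(γ-1) with γ ≥ 2, and h(ρ|r) = h(ρ) - h(r) - h'(r)(ρ - r). Then for r in a compact interval [a,b] with a > 0, there exists a constant C₃ > 0 such that h(ρ|r) ≥ C₃|ρ - r|² for all ρ ≥ 0 and r ∈ [a,b]. -/
/-- Bernoulli: tangent-line bound for `x ↦ x^p`, `p ≥ 1`. -/
lemma bern {p x y : ℝ} (hp : 1 ≤ p) (hx : 0 ≤ x) (hy : 0 < y) :
    y ^ p + p * y ^ (p - 1) * (x - y) ≤ x ^ p := by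
  have hs : (-1:ℝ) ≤ x / y - 1 := by
    have : 0 ≤ x / y := div_nonneg hx hy.le
    linarith
  have h := one_add_mul_self_le_rpow_one_add hs hp
  rw [add_sub_cancel] at h
  have hyp : 0 < y ^ p := Real.rpow_pos_of_pos hy p
  rw [Real.div_rpow hx hy.le] at h
  have key : y ^ p * (1 + p * (x / y - 1)) ≤ x ^ p := by
    calc y ^ p * (1 + p * (x / y - 1)) ≤ y ^ p * (x ^ p / y ^ p) :=
          mul_le_mul_of_nonneg_left h hyp.le
      _ = x ^ p := by field_simp
  rw [Real.rpow_sub_one hy.ne' p]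
  have e : y ^ p * (1 + p * (x / y - 1)) = y ^ p + p * (y ^ p / y) * (x - y) := by
    field_simp
  linarith [e ▸ key]

/-- For `γ ≥ 2` and `r` in a compact interval `[a,b] ⊂ (0,∞)`, the relative entropy
controls the square: `h(ρ|r) ≥ C₃|ρ-r|²` for all `ρ ≥ 0`. -/
theorem statement3 (γ a b : ℝ) (hγ : 2 ≤ γ) (ha : 0 < a) (hab : a ≤ b) :
    ∃ C₃ > (0:ℝ), ∀ ρ r : ℝ, 0 ≤ ρ → r ∈ Set.Icc a b →
      C₃ * |ρ - r| ^ (2:ℕ) ≤ hrel γ ρ r := by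
  have hγ1 : (0:ℝ) < γ - 1 := by linarith
  have ha2 : (0:ℝ) < a / 2 := by linarith
  set c : ℝ := (a / 2) ^ (γ - 2) with hc_def
  have hc : 0 < c := Real.rpow_pos_of_pos ha2 _
  have hγ0 : (0:ℝ) < γ := by linarith
  refine ⟨γ * c / 4, by positivity, ?_⟩
  intro ρ r hρ hr
  obtain ⟨hra, hrb⟩ := hr
  have hr0 : 0 < r := lt_of_lt_of_le ha hra
  set C : ℝ := γ * c / 4 with hC_def
  rw [sq_abs, ← sub_nonneg]
  set F : ℝ → ℝ := fun x => hrel γ x r - C * (x - r) ^ 2 with hF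
  show 0 ≤ F ρ
  have hFr : F r = 0 := by simp [hF, hrel]
  -- derivative of F
  have hderiv : ∀ x : ℝ, HasDerivAt F
      (γ * x ^ (γ - 1) / (γ - 1) - γ * r ^ (γ - 1) / (γ - 1) - C * (2 * (x - r))) x := by
    intro x
    have h1 : HasDerivAt (fun y : ℝ => y ^ γ) (γ * x ^ (γ - 1)) x :=
      Real.hasDerivAt_rpow_const (Or.inr (by linarith))
    have hid : HasDerivAt (fun y : ℝ => y - r) 1 x := (hasDerivAt_id x).sub_const r
    have h2 : HasDerivAt (fun y : ℝ => (γ * r ^ (γ - 1) / (γ - 1)) * (y - r))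
        ((γ * r ^ (γ - 1) / (γ - 1)) * 1) x := hid.const_mul _
    have h3 : HasDerivAt (fun y : ℝ => C * (y - r) ^ 2)
        (C * (2 * (x - r) ^ 1 * 1)) x := ((hid.pow 2).const_mul C)
    have h4 := (((h1.div_const (γ - 1)).sub_const (hfun γ r)).sub h2).sub h3
    have hFeq : F = fun y : ℝ => y ^ γ / (γ - 1) - hfun γ r
        - (γ * r ^ (γ - 1) / (γ - 1)) * (y - r) - C * (y - r) ^ 2 := by
      funext y; simp only [hF, hrel, hfun]
    rw [hFeq]
    exact h4.congr_deriv (by ring)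
  have hcont : Continuous F := by
    have : Differentiable ℝ F := fun x => (hderiv x).differentiableAt
    exact this.continuous
  -- sign of the derivative
  have key_up : ∀ x : ℝ, r ≤ x →
      0 ≤ γ * x ^ (γ - 1) / (γ - 1) - γ * r ^ (γ - 1) / (γ - 1) - C * (2 * (x - r)) := by
    intro x hx
    have hb := bern (p := γ - 1) (x := x) (y := r) (by linarith) (by linarith) hr0
    rw [show γ - 1 - 1 = γ - 2 by ring] at hb
    have hcD : c ≤ r ^ (γ - 2) := Real.rpow_le_rpow ha2.le (by linarith) (by linarith)
    have hxr : 0 ≤ x - r := by linarith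
    have h5 : (γ - 1) * c * (x - r) ≤ x ^ (γ - 1) - r ^ (γ - 1) := by
      nlinarith [mul_le_mul_of_nonneg_right hcD hxr]
    have e : γ * x ^ (γ - 1) / (γ - 1) - γ * r ^ (γ - 1) / (γ - 1)
        = γ * (x ^ (γ - 1) - r ^ (γ - 1)) / (γ - 1) := by ring
    rw [e]
    have h7 : C * (2 * (x - r)) ≤ γ * c * (x - r) := by
      rw [hC_def]; nlinarith [mul_nonneg (mul_nonneg hγ0.le hc.le) hxr]
    have h8 : γ * c * (x - r) ≤ γ * (x ^ (γ - 1) - r ^ (γ - 1)) / (γ - 1) := by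
      rw [le_div_iff₀ hγ1]; nlinarith [mul_le_mul_of_nonneg_left h5 hγ0.le]
    linarith
  have key_down : ∀ x : ℝ, 0 ≤ x → x ≤ r →
      γ * x ^ (γ - 1) / (γ - 1) - γ * r ^ (γ - 1) / (γ - 1) - C * (2 * (x - r)) ≤ 0 := by
    intro x hx0 hxr
    set m : ℝ := (x + r) / 2 with hm_def
    have hm0 : 0 < m := by simp only [hm_def]; linarith
    have ham : a / 2 ≤ m := by simp only [hm_def]; linarith
    have hb := bern (p := γ - 1) (x := r) (y := m) (by linarith) hr0.le hm0
    rw [show γ - 1 - 1 = γ - 2 by ring] at hb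
    have hxm : x ^ (γ - 1) ≤ m ^ (γ - 1) :=
      Real.rpow_le_rpow hx0 (by simp only [hm_def]; linarith) (by linarith)
    have hcD : c ≤ m ^ (γ - 2) := Real.rpow_le_rpow ha2.le ham (by linarith)
    have hrm : r - m = (r - x) / 2 := by simp only [hm_def]; ring
    have hrx : 0 ≤ r - x := by linarith
    have h5 : (γ - 1) * c * ((r - x) / 2) ≤ r ^ (γ - 1) - x ^ (γ - 1) := by
      rw [hrm] at hb
      nlinarith [mul_le_mul_of_nonneg_right hcD (by linarith : (0:ℝ) ≤ (r - x) / 2)]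
    have h8 : γ * c * ((r - x) / 2) ≤ γ * (r ^ (γ - 1) - x ^ (γ - 1)) / (γ - 1) := by
      rw [le_div_iff₀ hγ1]
      nlinarith [mul_le_mul_of_nonneg_left h5 hγ0.le, hxm]
    have e : γ * x ^ (γ - 1) / (γ - 1) - γ * r ^ (γ - 1) / (γ - 1)
        = -(γ * (r ^ (γ - 1) - x ^ (γ - 1)) / (γ - 1)) := by ring
    rw [e]
    have h7 : C * (2 * (x - r)) = -(γ * c * ((r - x) / 2)) := by rw [hC_def]; ring
    linarith
  rcases le_total r ρ with hcase | hcase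
  · have hmono : MonotoneOn F (Set.Ici r) := by
      apply monotoneOn_of_hasDerivWithinAt_nonneg (convex_Ici r) hcont.continuousOn
        (f' := fun x => γ * x ^ (γ - 1) / (γ - 1) - γ * r ^ (γ - 1) / (γ - 1) - C * (2 * (x - r)))
      · intro x hx
        exact (hderiv x).hasDerivWithinAt
      · intro x hx
        rw [interior_Ici] at hx
        exact key_up x (le_of_lt hx)
    have := hmono (Set.self_mem_Ici) hcase hcase
    -- careful: membership
    linarith [hFr ▸ hmono (Set.self_mem_Ici) (Set.mem_Ici.mpr hcase) hcase]
  · have hanti : AntitoneOn F (Set.Icc 0 r) := by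
      apply antitoneOn_of_hasDerivWithinAt_nonpos (convex_Icc 0 r) hcont.continuousOn
        (f' := fun x => γ * x ^ (γ - 1) / (γ - 1) - γ * r ^ (γ - 1) / (γ - 1) - C * (2 * (x - r)))
      · intro x hx
        exact (hderiv x).hasDerivWithinAt
      · intro x hx
        rw [interior_Icc] at hx
        exact key_down x hx.1.le hx.2.le
    have := hanti (Set.mem_Icc.mpr ⟨hρ, hcase⟩) (Set.mem_Icc.mpr ⟨hr0.le, le_refl r⟩) hcase
    linarith [hFr ▸ this]
end

section
/- Let h(ρ) = ρ^γ/(γ-1) with γ > 1 and h(ρ|r) = h(ρ) - h(r) - h'(r)(ρ - r). For r in a compact interval [a,b] with a > 0, for every δ > 0 there exists a constant C(δ) > 0 such that |ρ - r|^γ ≤ δ + C(δ) h(ρ|r) for all ρ ≥ 0 and all r ∈ [a,b]. -/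
lemma hrel_eq (γ ρ r : ℝ) :
    hrel γ ρ r = (ρ ^ γ - r ^ γ - γ * r ^ (γ - 1) * (ρ - r)) / (γ - 1) := by
  unfold hrel hfun; ring

lemma tangent_le {γ ρ r : ℝ} (hγ : 1 < γ) (hρ : 0 ≤ ρ) (hr : 0 < r) :
    r ^ γ + γ * r ^ (γ - 1) * (ρ - r) ≤ ρ ^ γ := by
  have hs : -1 ≤ (ρ - r) / r := by
    rw [le_div_iff₀ hr]; linarith
  have hb := one_add_mul_self_le_rpow_one_add hs hγ.le
  have h1 : 1 + (ρ - r) / r = ρ / r := by field_simp; ring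
  rw [h1, Real.div_rpow hρ hr.le] at hb
  have hrγ : (0:ℝ) < r ^ γ := Real.rpow_pos_of_pos hr γ
  have hkey : (1 + γ * ((ρ - r) / r)) * r ^ γ ≤ ρ ^ γ := by
    calc (1 + γ * ((ρ - r) / r)) * r ^ γ ≤ ρ ^ γ / r ^ γ * r ^ γ :=
          mul_le_mul_of_nonneg_right hb hrγ.le
      _ = ρ ^ γ := by field_simp
  have hpow : r ^ γ / r = r ^ (γ - 1) := by
    rw [Real.rpow_sub hr, Real.rpow_one]
  calc r ^ γ + γ * r ^ (γ - 1) * (ρ - r)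
      = (1 + γ * ((ρ - r) / r)) * r ^ γ := by
        rw [← hpow]; field_simp
    _ ≤ ρ ^ γ := hkey

lemma tangent_lt {γ ρ r : ℝ} (hγ : 1 < γ) (hρ : 0 ≤ ρ) (hr : 0 < r) (hne : ρ ≠ r) :
    r ^ γ + γ * r ^ (γ - 1) * (ρ - r) < ρ ^ γ := by
  have hs : -1 ≤ (ρ - r) / r := by
    rw [le_div_iff₀ hr]; linarith
  have hs' : (ρ - r) / r ≠ 0 := by
    intro h
    apply hne
    have := (div_eq_zero_iff.mp h).resolve_right hr.ne'
    linarith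
  have hb := one_add_mul_self_lt_rpow_one_add hs hs' hγ
  have h1 : 1 + (ρ - r) / r = ρ / r := by field_simp; ring
  rw [h1, Real.div_rpow hρ hr.le] at hb
  have hrγ : (0:ℝ) < r ^ γ := Real.rpow_pos_of_pos hr γ
  have hkey : (1 + γ * ((ρ - r) / r)) * r ^ γ < ρ ^ γ := by
    calc (1 + γ * ((ρ - r) / r)) * r ^ γ < ρ ^ γ / r ^ γ * r ^ γ :=
          mul_lt_mul_of_pos_right hb hrγ
      _ = ρ ^ γ := by field_simp
  calc r ^ γ + γ * r ^ (γ - 1) * (ρ - r)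
      = (1 + γ * ((ρ - r) / r)) * r ^ γ := by
        rw [show r ^ (γ - 1) = r ^ γ / r by rw [Real.rpow_sub hr, Real.rpow_one]]
        field_simp
    _ < ρ ^ γ := hkey

lemma hrel_nonneg {γ ρ r : ℝ} (hγ : 1 < γ) (hρ : 0 ≤ ρ) (hr : 0 < r) :
    0 ≤ hrel γ ρ r := by
  rw [hrel_eq]
  have h := tangent_le hγ hρ hr
  have h1 : (0:ℝ) < γ - 1 := by linarith
  apply div_nonneg (by linarith) h1.le

lemma hrel_pos {γ ρ r : ℝ} (hγ : 1 < γ) (hρ : 0 ≤ ρ) (hr : 0 < r) (hne : ρ ≠ r) :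
    0 < hrel γ ρ r := by
  rw [hrel_eq]
  have h := tangent_lt hγ hρ hr hne
  exact div_pos (by linarith) (by linarith)

lemma continuous_rpow_const {q : ℝ} (hq : 0 ≤ q) : Continuous fun x : ℝ => x ^ q :=
  continuous_iff_continuousAt.mpr fun x => Real.continuousAt_rpow_const x q (Or.inr hq)

/-- For `γ > 1`, `r ∈ [a,b] ⊂ (0,∞)` and every `δ > 0` there is `C(δ) > 0` with
`|ρ - r|^γ ≤ δ + C(δ) h(ρ|r)` for all `ρ ≥ 0`. -/
theorem statement4 (γ a b : ℝ) (hγ : 1 < γ) (ha : 0 < a) (hab : a ≤ b) :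
    ∀ δ > (0:ℝ), ∃ C > (0:ℝ), ∀ ρ r : ℝ, 0 ≤ ρ → r ∈ Set.Icc a b →
      |ρ - r| ^ γ ≤ δ + C * hrel γ ρ r := by
  intro δ hδ
  have hb : 0 < b := lt_of_lt_of_le ha hab
  have hγ0 : (0:ℝ) < γ := lt_trans one_pos hγ
  have hγ1 : (0:ℝ) < γ - 1 := by linarith
  set M : ℝ := max (b + 1) (max ((4 * γ) ^ (γ - 1)⁻¹ * b) ((4 : ℝ) ^ γ⁻¹ * b)) with hMdef
  have hMb : b + 1 ≤ M := le_max_left _ _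
  -- the large-ρ regime
  have hlarge : ∀ ρ r : ℝ, M ≤ ρ → r ∈ Set.Icc a b →
      |ρ - r| ^ γ ≤ (2 * (γ - 1)) * hrel γ ρ r := by
    intro ρ r hρM hr
    obtain ⟨har, hrb⟩ := hr
    have hrpos : 0 < r := lt_of_lt_of_le ha har
    have hρb : b + 1 ≤ ρ := le_trans hMb hρM
    have hρpos : 0 < ρ := by linarith
    -- |ρ - r|^γ ≤ ρ^γ
    have habs : |ρ - r| = ρ - r := abs_of_pos (by linarith)
    have h1 : |ρ - r| ^ γ ≤ ρ ^ γ := by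
      rw [habs]
      exact Real.rpow_le_rpow (by linarith) (by linarith) hγ0.le
    -- r^γ ≤ ρ^γ / 4
    have h4pos : (0:ℝ) < (4:ℝ) ^ γ⁻¹ := Real.rpow_pos_of_pos (by norm_num) _
    have hρ4 : (4 : ℝ) ^ γ⁻¹ * b ≤ ρ := le_trans (le_trans (le_max_right _ _) (le_max_right _ _)) hρM
    have h2 : r ^ γ ≤ ρ ^ γ / 4 := by
      have hbγ : ((4 : ℝ) ^ γ⁻¹ * b) ^ γ = 4 * b ^ γ := by
        rw [Real.mul_rpow h4pos.le hb.le, ← Real.rpow_mul (by norm_num : (0:ℝ) ≤ 4),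
          inv_mul_cancel₀ hγ0.ne', Real.rpow_one]
      have := Real.rpow_le_rpow (by positivity) hρ4 hγ0.le
      rw [hbγ] at this
      have hrb' : r ^ γ ≤ b ^ γ := Real.rpow_le_rpow hrpos.le hrb hγ0.le
      linarith
    -- γ * r^(γ-1) * (ρ - r) ≤ ρ^γ / 4
    have hsplit : ρ ^ (γ - 1) * ρ = ρ ^ γ := by
      have h := Real.rpow_add hρpos (γ - 1) 1
      rw [Real.rpow_one] at h
      rw [← h]; norm_num
    have h4γpos : (0:ℝ) < (4 * γ) ^ (γ - 1)⁻¹ := Real.rpow_pos_of_pos (by linarith) _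
    have hρ4γ : (4 * γ) ^ (γ - 1)⁻¹ * b ≤ ρ :=
      le_trans (le_trans (le_max_left _ _) (le_max_right _ _)) hρM
    have h3 : γ * r ^ (γ - 1) * (ρ - r) ≤ ρ ^ γ / 4 := by
      have hr1 : r ^ (γ - 1) ≤ b ^ (γ - 1) := Real.rpow_le_rpow hrpos.le hrb hγ1.le
      have hbγ1 : ((4 * γ) ^ (γ - 1)⁻¹ * b) ^ (γ - 1) = 4 * γ * b ^ (γ - 1) := by
        rw [Real.mul_rpow h4γpos.le hb.le, ← Real.rpow_mul (by linarith : (0:ℝ) ≤ 4 * γ),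
          inv_mul_cancel₀ hγ1.ne', Real.rpow_one]
      have hργ1 : 4 * γ * b ^ (γ - 1) ≤ ρ ^ (γ - 1) := by
        have := Real.rpow_le_rpow (by positivity) hρ4γ hγ1.le
        rwa [hbγ1] at this
      have hb1 : 0 ≤ b ^ (γ - 1) := by positivity
      have hρ1 : 0 ≤ ρ ^ (γ - 1) := by positivity
      calc γ * r ^ (γ - 1) * (ρ - r) ≤ γ * b ^ (γ - 1) * ρ := by
            apply mul_le_mul (by nlinarith) (by linarith) (by linarith) (by positivity)
        _ ≤ ρ ^ (γ - 1) / 4 * ρ := by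
            apply mul_le_mul_of_nonneg_right (by linarith) hρpos.le
        _ = ρ ^ γ / 4 := by rw [div_mul_eq_mul_div, hsplit]
    -- combine
    rw [hrel_eq]
    calc |ρ - r| ^ γ ≤ ρ ^ γ := h1
      _ ≤ 2 * (ρ ^ γ - r ^ γ - γ * r ^ (γ - 1) * (ρ - r)) := by linarith
      _ = 2 * (γ - 1) * ((ρ ^ γ - r ^ γ - γ * r ^ (γ - 1) * (ρ - r)) / (γ - 1)) := by
          field_simp
  -- small-difference threshold
  set ε : ℝ := δ ^ γ⁻¹ with hεdef
  have hε : 0 < ε := Real.rpow_pos_of_pos hδ _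
  have hεγ : ε ^ γ = δ := by
    rw [hεdef, ← Real.rpow_mul hδ.le, inv_mul_cancel₀ hγ0.ne', Real.rpow_one]
  -- compact set
  set S : Set (ℝ × ℝ) :=
    (Set.Icc (0:ℝ) M ×ˢ Set.Icc a b) ∩ {p : ℝ × ℝ | ε ≤ |p.1 - p.2|} with hSdef
  have hScomp : IsCompact S :=
    (isCompact_Icc.prod isCompact_Icc).inter_right
      (isClosed_le continuous_const (continuous_fst.sub continuous_snd).abs)
  have hcontG : Continuous fun p : ℝ × ℝ => |p.1 - p.2| ^ γ :=
    (continuous_rpow_const hγ0.le).comp (continuous_fst.sub continuous_snd).abs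
  have hcontH : Continuous fun p : ℝ × ℝ => hrel γ p.1 p.2 := by
    unfold hrel hfun
    exact
      ((((continuous_rpow_const hγ0.le).comp continuous_fst).div_const _).sub
        (((continuous_rpow_const hγ0.le).comp continuous_snd).div_const _)).sub
        (((continuous_const.mul
          ((continuous_rpow_const hγ1.le).comp continuous_snd)).div_const _).mul
          (continuous_fst.sub continuous_snd))
  -- positivity of hrel on S
  have hSpos : ∀ p : ℝ × ℝ, p ∈ S → 0 < hrel γ p.1 p.2 := by
    rintro ⟨ρ, r⟩ ⟨⟨hρ, hr⟩, hd⟩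
    have hrpos : 0 < r := lt_of_lt_of_le ha hr.1
    have hd' : ε ≤ |ρ - r| := hd
    have hne : ρ ≠ r := by
      intro h
      rw [h, sub_self, abs_zero] at hd'
      linarith
    exact hrel_pos hγ hρ.1 hrpos hne
  by_cases hS : S.Nonempty
  · obtain ⟨pA, hpA, hA⟩ := hScomp.exists_isMaxOn hS hcontG.continuousOn
    obtain ⟨pm, hpm, hm⟩ := hScomp.exists_isMinOn hS hcontH.continuousOn
    have hmpos : 0 < hrel γ pm.1 pm.2 := hSpos pm hpm
    set C : ℝ := max (|pA.1 - pA.2| ^ γ / hrel γ pm.1 pm.2) (2 * (γ - 1)) with hCdef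
    have hC2 : 2 * (γ - 1) ≤ C := le_max_right _ _
    have hCpos : 0 < C := lt_of_lt_of_le (by linarith) hC2
    refine ⟨C, hCpos, ?_⟩
    intro ρ r hρ hr
    have hrpos : 0 < r := lt_of_lt_of_le ha hr.1
    have hrelnn : 0 ≤ hrel γ ρ r := hrel_nonneg hγ hρ hrpos
    rcases lt_or_ge |ρ - r| ε with hsmall | hbig
    · have : |ρ - r| ^ γ ≤ ε ^ γ := Real.rpow_le_rpow (abs_nonneg _) hsmall.le hγ0.le
      rw [hεγ] at this
      nlinarith
    · rcases le_or_gt ρ M with hρM | hρM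
      · have hmem : (ρ, r) ∈ S := ⟨⟨⟨hρ, hρM⟩, hr⟩, hbig⟩
        have h1 : |ρ - r| ^ γ ≤ |pA.1 - pA.2| ^ γ := hA hmem
        have h2 : hrel γ pm.1 pm.2 ≤ hrel γ ρ r := hm hmem
        have hAnn : 0 ≤ |pA.1 - pA.2| ^ γ := by positivity
        have h3 : |pA.1 - pA.2| ^ γ ≤ (|pA.1 - pA.2| ^ γ / hrel γ pm.1 pm.2) * hrel γ ρ r := by
          rw [div_mul_eq_mul_div, le_div_iff₀ hmpos]
          exact mul_le_mul_of_nonneg_left h2 hAnn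
        have h4 : (|pA.1 - pA.2| ^ γ / hrel γ pm.1 pm.2) * hrel γ ρ r ≤ C * hrel γ ρ r :=
          mul_le_mul_of_nonneg_right (le_max_left _ _) hrelnn
        linarith
      · have h1 := hlarge ρ r hρM.le hr
        have h2 : 2 * (γ - 1) * hrel γ ρ r ≤ C * hrel γ ρ r :=
          mul_le_mul_of_nonneg_right hC2 hrelnn
        linarith
  · refine ⟨2 * (γ - 1), by linarith, ?_⟩
    intro ρ r hρ hr
    have hrpos : 0 < r := lt_of_lt_of_le ha hr.1
    have hrelnn : 0 ≤ hrel γ ρ r := hrel_nonneg hγ hρ hrpos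
    rcases lt_or_ge |ρ - r| ε with hsmall | hbig
    · have : |ρ - r| ^ γ ≤ ε ^ γ := Real.rpow_le_rpow (abs_nonneg _) hsmall.le hγ0.le
      rw [hεγ] at this
      nlinarith
    · rcases le_or_gt ρ M with hρM | hρM
      · exact absurd ⟨(ρ, r), ⟨⟨⟨hρ, hρM⟩, hr⟩, hbig⟩⟩ hS
      · have h1 := hlarge ρ r hρM.le hr
        linarith
end
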